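/- For positive integers m and h with m ≥ h and n ≥ h > 0: D(m+n, h) = ∑_{k=0}^{h} ( D(n−k, k)·D(m+k, h−k) + D(n−k−1, k)·D(m+k, h−k−1) ), where terms with negative arguments are interpreted as 0 and D denotes the Delannoy numbers. -/

import Mathlib

open Finset

/-- The Delannoy numbers. -/
def D : ℕ → ℕ → ℕ
  | 0, _ => 1
  | _ + 1, 0 => 1
  | m + 1, n + 1 => D m (n + 1) + D (m + 1) n + D m n

/-- Delannoy numbers with integer arguments, equal to 0 when an argument is negative. -/
def Dz (a b : ℤ) : ℤ := if a < 0 ∨ b < 0 then 0 else D a.toNat b.toNat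

/-!
Write `S(m, n)` for the right-hand side. Expanding `D(m + 1 + k, h - k)` by the Delannoy
recurrence in `S(m + 1, n)`, and `D(n + 1 - k, k)` in `S(m, n + 1)`, leaves the same terms up to
the index shift `k ↦ k + 1`, whose boundary terms vanish. Hence `S(m, n)` depends only on `m + n`,
and at `n = 0` only the term `k = 0` survives, giving `D(m, h)`.
-/

@[simp]
lemma D_zero_left (n : ℕ) : D 0 n = 1 := by
  simp [D]

@[simp]
lemma D_zero_right (m : ℕ) : D m 0 = 1 := by
  cases m <;> simp [D]

lemma D_succ_succ (m n : ℕ) : D (m + 1) (n + 1) = D m (n + 1) + D (m + 1) n + D m n := by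
  simp [D]

lemma Dz_of_neg_left {a : ℤ} (ha : a < 0) (b : ℤ) : Dz a b = 0 := by
  simp [Dz, ha]

lemma Dz_of_neg_right (a : ℤ) {b : ℤ} (hb : b < 0) : Dz a b = 0 := by
  simp [Dz, hb]

@[simp, norm_cast]
lemma Dz_natCast (a b : ℕ) : Dz a b = D a b := by
  simp [Dz]

lemma Dz_zero_left {b : ℤ} (hb : 0 ≤ b) : Dz 0 b = 1 := by
  simp [Dz, hb.not_gt]

lemma Dz_zero_right {a : ℤ} (ha : 0 ≤ a) : Dz a 0 = 1 := by
  simp [Dz, ha.not_gt]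

lemma Dz_eq_sub_one (a b : ℤ) (hab : a ≠ 0 ∨ b ≠ 0) :
    Dz a b = Dz (a - 1) b + Dz a (b - 1) + Dz (a - 1) (b - 1) := by
  rcases lt_or_ge a 0 with ha | ha
  · simp [Dz_of_neg_left, ha, show a - 1 < 0 by omega]
  rcases lt_or_ge b 0 with hb | hb
  · simp [Dz_of_neg_right, hb, show b - 1 < 0 by omega]
  obtain rfl | ha0 := eq_or_ne a 0
  · rw [Dz_zero_left hb, Dz_zero_left (by omega : 0 ≤ b - 1), Dz_of_neg_left (by simp),
      Dz_of_neg_left (by simp)]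
    ring
  obtain rfl | hb0 := eq_or_ne b 0
  · rw [Dz_zero_right ha, Dz_zero_right (by omega : 0 ≤ a - 1), Dz_of_neg_right _ (by simp),
      Dz_of_neg_right _ (by simp)]
    ring
  obtain ⟨x, rfl⟩ : ∃ x : ℕ, a = x + 1 := ⟨(a - 1).toNat, by omega⟩
  obtain ⟨y, rfl⟩ : ∃ y : ℕ, b = y + 1 := ⟨(b - 1).toNat, by omega⟩
  simp only [add_sub_cancel_right]
  exact_mod_cast D_succ_succ x y

lemma sum_range_succ_shift {M : Type*} [AddCommMonoid M] (f : ℕ → M) (N : ℕ) (h0 : f 0 = 0)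
    (hN : f (N + 1) = 0) :
    ∑ k ∈ range (N + 1), f (k + 1) = ∑ k ∈ range (N + 1), f k := by
  rw [sum_range_succ, sum_range_succ', hN, h0]

def delannoyConvolution (m n h : ℕ) : ℤ :=
  ∑ k ∈ range (h + 1),
    (Dz (n - k) k * Dz (m + k) (h - k) + Dz (n - k - 1) k * Dz (m + k) (h - k - 1))

lemma delannoyConvolution_zero_right (m h : ℕ) : delannoyConvolution m 0 h = D m h := by
  rw [delannoyConvolution, sum_eq_single_of_mem 0 (by simp)]
  · simp [Dz_zero_left, Dz_of_neg_left]
  · intro k _ hk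
    have hk' : -(k : ℤ) < 0 := by omega
    simp [Dz_of_neg_left hk', Dz_of_neg_left (by omega : -(k : ℤ) - 1 < 0)]

lemma delannoyConvolution_succ_left (m n h : ℕ) :
    delannoyConvolution (m + 1) n h = delannoyConvolution m (n + 1) h := by
  set common : ℕ → ℤ := fun k => Dz (n - k) k * (Dz (m + k) (h - k) + Dz (m + k) (h - k - 1))
  set f : ℕ → ℤ := fun k => (Dz (n + 1 - k) (k - 1) + Dz (n - k) (k - 1)) * Dz (m + k) (h - k)
  have hshift : ∑ k ∈ range (h + 1), f (k + 1) = ∑ k ∈ range (h + 1), f k :=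
    sum_range_succ_shift f h (by simp [f, Dz_of_neg_right]) (by simp [f, Dz_of_neg_right])
  calc _ = ∑ k ∈ range (h + 1), (common k + f (k + 1)) := by
        refine sum_congr rfl fun k _ => ?_
        have hrec := Dz_eq_sub_one (m + 1 + k) (h - k) (by omega)
        simp only [common, f]
        push_cast
        linear_combination (norm := ring_nf) Dz (n - k) k * hrec
    _ = ∑ k ∈ range (h + 1), (common k + f k) := by
        rw [sum_add_distrib, sum_add_distrib, hshift]
    _ = delannoyConvolution m (n + 1) h := by
        refine sum_congr rfl fun k _ => ?_
        have hrec := Dz_eq_sub_one (n + 1 - k) k (by omega)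
        simp only [common, f]
        push_cast
        linear_combination (norm := ring_nf) -Dz (m + k) (h - k) * hrec

theorem D_add_eq_delannoyConvolution (m n h : ℕ) :
    (D (m + n) h : ℤ) = delannoyConvolution m n h := by
  induction n generalizing m with
  | zero => rw [add_zero, delannoyConvolution_zero_right]
  | succ n ih => rw [← add_assoc, add_right_comm, ih, delannoyConvolution_succ_left]

theorem stmt19_general (m n h : ℕ) :
    (D (m + n) h : ℤ) = ∑ k ∈ range (h + 1),
      (Dz ((n : ℤ) - k) k * Dz ((m : ℤ) + k) ((h : ℤ) - k) +
        Dz ((n : ℤ) - k - 1) k * Dz ((m : ℤ) + k) ((h : ℤ) - k - 1)) :=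
  D_add_eq_delannoyConvolution m n h

theorem stmt19 (m n h : ℕ) (hh : 0 < h) (hm : h ≤ m) (hn : h ≤ n) :
    (D (m + n) h : ℤ) = ∑ k ∈ range (h + 1),
      (Dz ((n : ℤ) - k) k * Dz ((m : ℤ) + k) ((h : ℤ) - k) +
        Dz ((n : ℤ) - k - 1) k * Dz ((m : ℤ) + k) ((h : ℤ) - k - 1)) :=
  stmt19_general m n h
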